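/- Fix a ∈ ℝ, a ∉ {0}. The center of the group G = { g(x₁,x₂,x₃,x₄) : xᵢ ∈ ℝ } (with g as above) is trivial. -/

import Mathlib

noncomputable def g (a x₁ x₂ x₃ x₄ : ℝ) : Matrix (Fin 4) (Fin 4) ℝ :=
  !![Real.exp (a * x₄), 0, 0, x₁;
     0, Real.exp x₄, x₄ * Real.exp x₄, x₂;
     0, 0, Real.exp x₄, x₃;
     0, 0, 0, 1]

/-! Writing `g(x) = (A(x₄), v)` as an affine map with linear part `A(x₄)` and translation
`v = (x₁, x₂, x₃)`, a central element must commute with the pure translation `g(0,0,1,0)`,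
which forces `A(x₄) = 1`, i.e. `x₄ = 0`; and with `g(0,0,0,1)`, which forces `v` to be fixed by
`A(1)`. Since `e^a ≠ 1` and `e ≠ 1`, the only fixed vector of `A(1)` is `0`. -/

theorem g_mul (a x₁ x₂ x₃ x₄ y₁ y₂ y₃ y₄ : ℝ) :
    g a x₁ x₂ x₃ x₄ * g a y₁ y₂ y₃ y₄ =
      g a (x₁ + Real.exp (a * x₄) * y₁) (x₂ + Real.exp x₄ * y₂ + x₄ * Real.exp x₄ * y₃)
        (x₃ + Real.exp x₄ * y₃) (x₄ + y₄) := by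
  ext i j
  fin_cases i <;> fin_cases j <;>
    simp [g, Matrix.mul_apply, Fin.sum_univ_four, mul_add, Real.exp_add] <;> ring

theorem g_zero (a : ℝ) : g a 0 0 0 0 = 1 := by
  ext i j
  fin_cases i <;> fin_cases j <;> simp [g]

theorem g_inj {a x₁ x₂ x₃ x₄ y₁ y₂ y₃ y₄ : ℝ} :
    g a x₁ x₂ x₃ x₄ = g a y₁ y₂ y₃ y₄ ↔ x₁ = y₁ ∧ x₂ = y₂ ∧ x₃ = y₃ ∧ x₄ = y₄ := by
  refine ⟨fun h => ⟨?_, ?_, ?_, ?_⟩, by rintro ⟨rfl, rfl, rfl, rfl⟩; rfl⟩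
  · simpa [g] using congrFun (congrFun h 0) 3
  · simpa [g] using congrFun (congrFun h 1) 3
  · simpa [g] using congrFun (congrFun h 2) 3
  · exact Real.exp_injective (by simpa [g] using congrFun (congrFun h 1) 1)

theorem g_center_trivial (a : ℝ) (ha : a ≠ 0) :
    ∀ M ∈ {M | ∃ x₁ x₂ x₃ x₄ : ℝ, M = g a x₁ x₂ x₃ x₄},
      (∀ N ∈ {M | ∃ x₁ x₂ x₃ x₄ : ℝ, M = g a x₁ x₂ x₃ x₄}, M * N = N * M) →
      M = 1 := by
  rintro M ⟨x₁, x₂, x₃, x₄, rfl⟩ hc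
  have hexp_one : Real.exp 1 ≠ 1 := by simp [Real.exp_eq_one_iff]
  have hexp_a : Real.exp a ≠ 1 := by simpa [Real.exp_eq_one_iff] using ha
  have comm_translation := hc _ ⟨0, 0, 1, 0, rfl⟩
  have comm_diagonal := hc _ ⟨0, 0, 0, 1, rfl⟩
  rw [g_mul, g_mul, g_inj] at comm_translation comm_diagonal
  obtain ⟨-, -, hx₄, -⟩ := comm_translation
  obtain ⟨hx₁, hx₂, hx₃, -⟩ := comm_diagonal
  simp only [mul_zero, add_zero, zero_add, mul_one, Real.exp_zero] at hx₁ hx₂ hx₃ hx₄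
  have h₄ : x₄ = 0 := (Real.exp_eq_one_iff x₄).mp (by linarith)
  have h₃ : x₃ = 0 := (mul_left_eq_self₀.mp hx₃.symm).resolve_left hexp_one
  have h₁ : x₁ = 0 := (mul_left_eq_self₀.mp hx₁.symm).resolve_left hexp_a
  have h₂ : x₂ = 0 :=
    (mul_left_eq_self₀.mp (by simpa [h₃] using hx₂.symm)).resolve_left hexp_one
  rw [h₁, h₂, h₃, h₄, g_zero]
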